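/- Let ψ : (0,1] → (0,∞) be increasing with lim_{t→0⁺} ψ(t)/t = 0, and Ω_ψ the associated cuspidal domain in ℝ^n. Then the measure density condition fails: there is no constant C > 0 such that |B(z,r)| ≤ C |B(z,r) ∩ Ω_ψ| for all z ∈ Ω_ψ and all 0 < r < 1, where |·| denotes Lebesgue measure. -/

import Mathlib

open MeasureTheory Set Metric Filter
open scoped ENNReal Topology

noncomputable section

/-- Euclidean distance on `ℝ × ℝ^{n-1}`. -/
def dist2 {m : ℕ} (z w : ℝ × EuclideanSpace ℝ (Fin m)) : ℝ :=
  Real.sqrt ((z.1 - w.1) ^ 2 + ‖z.2 - w.2‖ ^ 2)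

/-- Euclidean open ball in `ℝ × ℝ^{n-1}`. -/
def eball {m : ℕ} (z : ℝ × EuclideanSpace ℝ (Fin m)) (r : ℝ) :
    Set (ℝ × EuclideanSpace ℝ (Fin m)) :=
  {w | dist2 w z < r}

/-!
Test the measure density condition at the point `(s/2, 0)` on the axis with radius `s/2`.
The ball contains a cylinder of length `s/2` over an `(n-1)`-ball of radius `s/4`, so its
measure is `≳ s^n`. Its intersection with `Ω_ψ` lies in the cylinder `(0,s) × B(0, ψ(s))`
because `ψ` is increasing, so that intersection has measure `≲ s ψ(s)^{n-1}`. The density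
condition thus forces `ψ(s)/s` to stay bounded below, against `ψ(s)/s → 0`.
-/

section Cylinders

variable {m : ℕ}

lemma mem_eball_iff {z w : ℝ × EuclideanSpace ℝ (Fin m)} {r : ℝ} (hr : 0 < r) :
    w ∈ _root_.eball z r ↔ (w.1 - z.1) ^ 2 + ‖w.2 - z.2‖ ^ 2 < r ^ 2 :=
  Real.sqrt_lt' hr

lemma Ioo_prod_ball_subset_eball (z : ℝ × EuclideanSpace ℝ (Fin m)) {r : ℝ} (hr : 0 < r) :
    Ioo (z.1 - r / 2) (z.1 + r / 2) ×ˢ ball z.2 (r / 2) ⊆ _root_.eball z r := by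
  rintro ⟨s, x⟩ ⟨hs, hx⟩
  rw [mem_eball_iff hr]
  have hs' : |s - z.1| < r / 2 := abs_sub_lt_iff.2 ⟨by linarith [hs.2], by linarith [hs.1]⟩
  have hx' : ‖x - z.2‖ < r / 2 := mem_ball_iff_norm.1 hx
  nlinarith [abs_nonneg (s - z.1), sq_abs (s - z.1), norm_nonneg (x - z.2)]

lemma volume_Ioo_prod_ball (a b : ℝ) (x : EuclideanSpace ℝ (Fin m)) {r : ℝ} (hr : 0 < r) :
    volume (Ioo a b ×ˢ ball x r) =
      ENNReal.ofReal ((b - a) * r ^ m) * volume (ball (0 : EuclideanSpace ℝ (Fin m)) 1) := by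
  rw [Measure.volume_eq_prod, Measure.prod_prod, Real.volume_Ioo,
    Measure.addHaar_ball_of_pos volume x hr, finrank_euclideanSpace_fin,
    ENNReal.ofReal_mul' (by positivity), mul_assoc]

end Cylinders

/-- The cuspidal domain `Ω_ψ`, with `m = n - 1`. -/
def cuspDomain (m : ℕ) (ψ : ℝ → ℝ) : Set (ℝ × EuclideanSpace ℝ (Fin m)) :=
  {z | z.1 ∈ Ioo (0:ℝ) 2 ∧ ‖z.2‖ < ψ z.1}

section Cusp

variable {m : ℕ} {ψ : ℝ → ℝ}

lemma axis_mem_cuspDomain {t : ℝ} (ht : t ∈ Ioo (0:ℝ) 2) (hψ : 0 < ψ t) :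
    ((t, 0) : ℝ × EuclideanSpace ℝ (Fin m)) ∈ cuspDomain m ψ :=
  ⟨ht, by simpa using hψ⟩

lemma eball_inter_cuspDomain_subset (hmono : MonotoneOn ψ (Ioc 0 1)) {s : ℝ}
    (hs : s ∈ Ioc (0:ℝ) 1) :
    _root_.eball ((s / 2, 0) : ℝ × EuclideanSpace ℝ (Fin m)) (s / 2) ∩ cuspDomain m ψ ⊆
      Ioo 0 s ×ˢ ball 0 (ψ s) := by
  rintro ⟨t, x⟩ ⟨hball, ⟨ht0, -⟩, hx⟩
  rw [mem_eball_iff (by linarith [hs.1])] at hball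
  have hts : t < s := by nlinarith [norm_nonneg (x - 0)]
  refine ⟨⟨ht0, hts⟩, mem_ball_zero_iff.2 ?_⟩
  exact hx.trans_le (hmono ⟨ht0, by linarith [hs.2]⟩ hs hts.le)

lemma pow_le_of_measure_density (hpos : ∀ t ∈ Ioc (0:ℝ) 1, 0 < ψ t)
    (hmono : MonotoneOn ψ (Ioc 0 1)) {C : ℝ} (hC : 0 < C)
    (H : ∀ z ∈ cuspDomain m ψ, ∀ r ∈ Ioo (0:ℝ) 1,
      volume (_root_.eball z r) ≤ ENNReal.ofReal C * volume (_root_.eball z r ∩ cuspDomain m ψ))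
    {s : ℝ} (hs : s ∈ Ioc (0:ℝ) 1) :
    (s / 4) ^ m ≤ 2 * C * ψ s ^ m := by
  obtain ⟨hs0, hs1⟩ := hs
  set ν := volume (ball (0 : EuclideanSpace ℝ (Fin m)) 1)
  set z : ℝ × EuclideanSpace ℝ (Fin m) := (s / 2, 0)
  have hvol : ENNReal.ofReal (s / 2 * (s / 4) ^ m) * ν ≤
      ENNReal.ofReal (C * (s * ψ s ^ m)) * ν :=
    calc ENNReal.ofReal (s / 2 * (s / 4) ^ m) * ν
        = volume (Ioo (s / 2 - s / 4) (s / 2 + s / 4) ×ˢ ball z.2 (s / 4)) := by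
          rw [volume_Ioo_prod_ball _ _ _ (by positivity)]; congr 2; ring
      _ ≤ volume (_root_.eball z (s / 2)) := by
          refine measure_mono ?_
          convert Ioo_prod_ball_subset_eball z (r := s / 2) (by positivity) using 3 <;> ring
      _ ≤ ENNReal.ofReal C * volume (_root_.eball z (s / 2) ∩ cuspDomain m ψ) :=
          H z (axis_mem_cuspDomain ⟨by positivity, by linarith⟩
            (hpos _ ⟨by positivity, by linarith⟩)) (s / 2)
            ⟨by positivity, by linarith⟩
      _ ≤ ENNReal.ofReal C * volume (Ioo 0 s ×ˢ ball z.2 (ψ s)) :=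
          mul_le_mul_right (measure_mono (eball_inter_cuspDomain_subset hmono ⟨hs0, hs1⟩)) _
      _ = ENNReal.ofReal (C * (s * ψ s ^ m)) * ν := by
          rw [volume_Ioo_prod_ball _ _ _ (hpos s ⟨hs0, hs1⟩), sub_zero,
            ENNReal.ofReal_mul hC.le, mul_assoc]
  rw [ENNReal.mul_le_mul_iff_left (measure_ball_pos volume 0 one_pos).ne'
    measure_ball_lt_top.ne,
    ENNReal.ofReal_le_ofReal_iff (by have := hpos s ⟨hs0, hs1⟩; positivity)] at hvol
  nlinarith

end Cusp

theorem cusp_measure_density_fails_general {m : ℕ} (hm : 1 ≤ m) (ψ : ℝ → ℝ)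
    (hpos : ∀ t ∈ Ioc (0:ℝ) 1, 0 < ψ t)
    (hmono : ∀ s ∈ Ioc (0:ℝ) 1, ∀ t ∈ Ioc (0:ℝ) 1, s ≤ t → ψ s ≤ ψ t)
    (hlim : Tendsto (fun t => ψ t / t) (nhdsWithin 0 (Ioi 0)) (nhds 0)) :
    ¬ ∃ C : ℝ, 0 < C ∧
      ∀ z ∈ {z : ℝ × EuclideanSpace ℝ (Fin m) | z.1 ∈ Ioo (0:ℝ) 2 ∧ ‖z.2‖ < ψ z.1},
      ∀ r ∈ Ioo (0:ℝ) 1,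
        volume (eball z r) ≤ ENNReal.ofReal C *
          volume (eball z r ∩
            {z : ℝ × EuclideanSpace ℝ (Fin m) | z.1 ∈ Ioo (0:ℝ) 2 ∧ ‖z.2‖ < ψ z.1}) := by
  rintro ⟨C, hC, H⟩
  have hsmall : Tendsto (fun s => 2 * C * (4 * (ψ s / s)) ^ m) (𝓝[>] 0) (𝓝 0) := by
    simpa [zero_pow (by omega : m ≠ 0)] using ((hlim.const_mul 4).pow m).const_mul (2 * C)
  obtain ⟨s, hs_lt, hs0, hs1⟩ :=
    ((hsmall.eventually_lt_const one_pos).and (Ioo_mem_nhdsGT one_pos)).exists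
  have hs : s ∈ Ioc (0:ℝ) 1 := ⟨hs0, hs1.le⟩
  have hbound := pow_le_of_measure_density hpos (fun a ha b hb => hmono a ha b hb) hC H hs
  refine hs_lt.not_ge ?_
  calc (1 : ℝ) = (s / 4) ^ m * (4 / s) ^ m := by
        rw [← mul_pow, div_mul_div_comm, mul_comm s, div_self (by positivity), one_pow]
    _ ≤ 2 * C * ψ s ^ m * (4 / s) ^ m := by gcongr
    _ = 2 * C * (4 * (ψ s / s)) ^ m := by rw [mul_assoc, ← mul_pow]; ring

/-- If `ψ : (0,1] → (0,∞)` is increasing with `lim_{t→0⁺} ψ(t)/t = 0`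
(extended by `ψ(t) = ψ(1)` on `(1,2)`), then the measure density condition fails for the
cuspidal domain `Ω_ψ`: there is no `C > 0` with
`|B(z,r)| ≤ C |B(z,r) ∩ Ω_ψ|` for all `z ∈ Ω_ψ` and `0 < r < 1`. -/
theorem cusp_measure_density_fails {m : ℕ} (hm : 1 ≤ m) (ψ : ℝ → ℝ)
    (hpos : ∀ t ∈ Ioc (0:ℝ) 1, 0 < ψ t)
    (hmono : ∀ s ∈ Ioc (0:ℝ) 1, ∀ t ∈ Ioc (0:ℝ) 1, s ≤ t → ψ s ≤ ψ t)
    (hext : ∀ t ∈ Ioo (1:ℝ) 2, ψ t = ψ 1)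
    (hlim : Tendsto (fun t => ψ t / t) (nhdsWithin 0 (Ioi 0)) (nhds 0)) :
    ¬ ∃ C : ℝ, 0 < C ∧
      ∀ z ∈ {z : ℝ × EuclideanSpace ℝ (Fin m) | z.1 ∈ Ioo (0:ℝ) 2 ∧ ‖z.2‖ < ψ z.1},
      ∀ r ∈ Ioo (0:ℝ) 1,
        volume (eball z r) ≤ ENNReal.ofReal C *
          volume (eball z r ∩
            {z : ℝ × EuclideanSpace ℝ (Fin m) | z.1 ∈ Ioo (0:ℝ) 2 ∧ ‖z.2‖ < ψ z.1}) :=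
  cusp_measure_density_fails_general hm ψ hpos hmono hlim
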